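/- arXiv:1007.0926 — 3 statements merged into one kernel-verified Lean document; each statement's English description precedes it below -/
import Mathlib

section
/- Let w(x) = Σ_{n=1}^∞ exp(-π n² x). For real b with 0 < b < π/2 (so cos b > 0), the identity 1 + 2w(e^{-ib}) = e^{ib/2}·(1 + 2w(e^{ib})) holds. -/
/-! With `x = I * τ`, `1 + 2 * w x` is Jacobi's theta function `θ(τ)`, and the substitution
`τ ↦ -1/τ` becomes `x ↦ x⁻¹`, so the modular transformation `θ(-1/τ) = (-I τ)^{1/2} θ(τ)` reads
`1 + 2 w(x⁻¹) = x^{1/2} (1 + 2 w(x))` for `0 < re x`. For `x = e^{ib}` with `|b| < π/2` the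
principal square root of `x` is `e^{ib/2}`. -/

open Complex Real

noncomputable def w (x : ℂ) : ℂ :=
  ∑' n : ℕ, Complex.exp (-(π : ℂ) * ((n : ℂ) + 1) ^ 2 * x)

lemma one_add_two_mul_w_eq_jacobiTheta {x : ℂ} (hx : 0 < x.re) :
    1 + 2 * w x = jacobiTheta (I * x) := by
  rw [jacobiTheta_eq_tsum_nat (by simpa using hx), w]
  congr 3 with n
  congr 1
  linear_combination (-(π : ℂ) * ((n : ℂ) + 1) ^ 2 * x) * I_mul_I

theorem one_add_two_mul_w_inv {x : ℂ} (hx : 0 < x.re) :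
    1 + 2 * w x⁻¹ = x ^ (1 / 2 : ℂ) * (1 + 2 * w x) := by
  have hx_inv : 0 < x⁻¹.re := by
    rw [inv_re]
    exact div_pos hx (normSq_pos.mpr fun h ↦ by simp [h] at hx)
  let τ : UpperHalfPlane := ⟨I * x, by simpa using hx⟩
  have hS : ((ModularGroup.S • τ : UpperHalfPlane) : ℂ) = I * x⁻¹ := by
    rw [UpperHalfPlane.modular_S_smul, UpperHalfPlane.coe_mk, inv_neg, mul_inv, inv_I]
    ring
  have hτ : -I * (τ : ℂ) = x := by
    change -I * (I * x) = x
    linear_combination -x * I_mul_I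
  have := jacobiTheta_S_smul τ
  rwa [hS, hτ, ← one_add_two_mul_w_eq_jacobiTheta hx_inv,
    ← one_add_two_mul_w_eq_jacobiTheta hx] at this

lemma exp_mul_I_cpow_one_half {b : ℝ} (hb0 : -π < b) (hb : b ≤ π) :
    Complex.exp (I * b) ^ (1 / 2 : ℂ) = Complex.exp (I * b / 2) := by
  rw [cpow_def_of_ne_zero (Complex.exp_ne_zero _), Complex.log_exp (by simpa using hb0)
    (by simpa using hb)]
  ring_nf

theorem stmt8 (b : ℝ) (hb0 : 0 < b) (hb : b < π / 2) :
    1 + 2 * w (Complex.exp (-(I * b))) =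
      Complex.exp (I * b / 2) * (1 + 2 * w (Complex.exp (I * b))) := by
  have hre : 0 < (Complex.exp (I * b)).re := by
    rw [mul_comm, exp_ofReal_mul_I_re]
    exact Real.cos_pos_of_mem_Ioo ⟨by linarith, hb⟩
  rw [Complex.exp_neg, one_add_two_mul_w_inv hre,
    exp_mul_I_cpow_one_half (by linarith [Real.pi_pos]) (by linarith [Real.pi_pos])]
end

section
/- Fejér's sign-change theorem: Let f : [0, c] → ℝ be continuous (c may be +∞, with f integrable against all powers t^n). If the sequence of moments ∫_0^c f(t) t^n dt, n = 0, 1, 2, ..., has at least N changes of sign, then f has at least N changes of sign (hence at least N zeroes) in (0, c). -/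
/-!
If `f` changes sign at most `k < N` times on `(0, c)`, there are `y₁, …, y_k ≥ 0` such that
`g(t) = f(t) ∏ (t - yᵢ)` has constant sign on `(0, c)`, so the moments of `g` never change sign.
But `g` arises from `f` by `k` multiplications by `t - y` with `y ≥ 0`, and each such
multiplication replaces the moment sequence `aₘ` by `aₘ₊₁ - y aₘ`, which loses at most one
sign change. Hence the moments of `g` still change sign at least `N - k ≥ 1` times.
-/

open Set

section SignChanges

variable {α : Type*}

def SignChangesAt [Preorder α] (f : α → ℝ) (s : Set α) {k : ℕ} (x : Fin (k + 1) → α) : Prop :=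
  StrictMono x ∧ (∀ j, x j ∈ s) ∧ ∀ j : Fin k, f (x j.castSucc) * f (x j.succ) < 0

def HasSignChanges [Preorder α] (f : α → ℝ) (s : Set α) (k : ℕ) : Prop :=
  ∃ x : Fin (k + 1) → α, SignChangesAt f s x

def SignConstantOn (f : α → ℝ) (s : Set α) : Prop :=
  ∀ u ∈ s, ∀ v ∈ s, 0 ≤ f u * f v

variable {f : α → ℝ} {s : Set α}

theorem SignConstantOn.mono {t : Set α} (h : SignConstantOn f t) (hst : s ⊆ t) :
    SignConstantOn f s :=
  fun u hu v hv => h u (hst hu) v (hst hv)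

theorem SignConstantOn.nonneg_or_nonpos (h : SignConstantOn f s) :
    (∀ t ∈ s, 0 ≤ f t) ∨ ∀ t ∈ s, f t ≤ 0 := by
  by_cases hpos : ∃ u ∈ s, 0 < f u
  · obtain ⟨u, hu, hfu⟩ := hpos
    exact .inl fun t ht => nonneg_of_mul_nonneg_right (h u hu t ht) hfu
  · push Not at hpos
    exact .inr hpos

theorem exists_mul_neg_of_not_signConstantOn (h : ¬ SignConstantOn f s)
    {w : α} (hw : f w ≠ 0) : ∃ q ∈ s, f q * f w < 0 := by
  simp only [SignConstantOn, not_forall, not_le] at h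
  obtain ⟨u, hu, v, hv, huv⟩ := h
  by_contra! hq
  nlinarith [hq u hu, hq v hv, mul_self_pos.2 hw]

variable [Preorder α]

theorem signChangesAt_const {v : α} (hv : v ∈ s) : SignChangesAt f s (fun _ : Fin 1 => v) :=
  ⟨Fin.strictMono_iff_lt_succ.2 fun j => j.elim0, fun _ => hv, fun j => j.elim0⟩

theorem SignChangesAt.cons {k : ℕ} {x : Fin (k + 1) → α} (hx : SignChangesAt f s x) {q : α}
    (hq : q ∈ s) (hlt : q < x 0) (hneg : f q * f (x 0) < 0) :
    SignChangesAt f s (Fin.cons q x : Fin (k + 2) → α) := by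
  obtain ⟨hmono, hmem, halt⟩ := hx
  refine ⟨Fin.strictMono_cons.2 ⟨fun j => hlt.trans_le (hmono.monotone (Fin.zero_le j)), hmono⟩,
    Fin.cases hq hmem, Fin.cases hneg fun j => ?_⟩
  simpa only [Fin.cons_succ, ← Fin.succ_castSucc] using halt j

theorem SignChangesAt.tail {k : ℕ} {x : Fin (k + 2) → α} (hx : SignChangesAt f s x) :
    SignChangesAt f s (Fin.tail x) := by
  obtain ⟨hmono, hmem, halt⟩ := hx
  refine ⟨hmono.comp Fin.strictMono_succ, fun j => hmem _, fun j => ?_⟩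
  simpa only [Fin.tail, Fin.succ_castSucc] using halt j.succ

theorem SignChangesAt.of_mul_pos {g : α → ℝ} {k : ℕ} {x : Fin (k + 1) → α}
    (hx : SignChangesAt (fun t => f t * g t) s x) (hg : ∀ j, 0 < g (x j)) :
    SignChangesAt f s x := by
  obtain ⟨hmono, hmem, halt⟩ := hx
  refine ⟨hmono, hmem, fun j => ?_⟩
  have := halt j
  have := mul_pos (hg j.castSucc) (hg j.succ)
  nlinarith

theorem HasSignChanges.not_signConstantOn {k : ℕ} (h : HasSignChanges f s (k + 1)) :
    ¬ SignConstantOn f s := by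
  obtain ⟨x, -, hmem, halt⟩ := h
  exact fun hconst => (halt 0).not_ge (hconst _ (hmem _) _ (hmem _))

theorem signConstantOn_of_not_hasSignChanges_one {α : Type*} [LinearOrder α] {f : α → ℝ}
    {s : Set α} (h : ¬ HasSignChanges f s 1) :
    SignConstantOn f s := by
  have key : ∀ u ∈ s, ∀ v ∈ s, u < v → 0 ≤ f u * f v := fun u hu v hv huv => by
    by_contra! hneg
    exact h ⟨_, (signChangesAt_const hv).cons hu huv hneg⟩
  intro u hu v hv
  rcases lt_trichotomy u v with huv | rfl | hvu
  · exact key u hu v hv huv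
  · exact mul_self_nonneg _
  · simpa only [mul_comm] using key v hv u hu hvu

end SignChanges

theorem exists_signConstantOn_Ioo_maximal {f : ℝ → ℝ} {a b : ℝ}
    (h : ¬ SignConstantOn f (Ioo a b)) :
    ∃ y, a ≤ y ∧ SignConstantOn f (Ioo a y) ∧ ∀ w, y < w → ¬ SignConstantOn f (Ioo a w) := by
  set A := {t | SignConstantOn f (Ioo a t)}
  have haA : a ∈ A := fun u hu => ((lt_irrefl a) (hu.1.trans hu.2)).elim
  have hbdd : BddAbove A := ⟨b, fun t ht => not_lt.1 fun hbt =>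
    h (SignConstantOn.mono ht (Ioo_subset_Ioo_right hbt.le))⟩
  refine ⟨sSup A, le_csSup hbdd haA, fun u hu v hv => ?_, fun w hw hwA => ?_⟩
  · obtain ⟨t, htA, ht⟩ := exists_lt_of_lt_csSup ⟨a, haA⟩ (max_lt hu.2 hv.2)
    exact htA u ⟨hu.1, (le_max_left u v).trans_lt ht⟩ v ⟨hv.1, (le_max_right u v).trans_lt ht⟩
  · exact hw.not_ge (le_csSup hbdd hwA)

/-- At most one point of a sign-change chain of `f (t) (t - y)` lies left of `y`; a sign change of
`f` just left of the first point beyond `y` supplies one more point. -/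
theorem HasSignChanges.of_mul_sub {f : ℝ → ℝ} {a b y : ℝ} (hleft : SignConstantOn f (Ioo a y))
    (hright : ∀ w, y < w → ¬ SignConstantOn f (Ioo a w)) {k : ℕ}
    (h : HasSignChanges (fun t => f t * (t - y)) (Ioo a b) (k + 1)) :
    HasSignChanges f (Ioo a b) (k + 2) := by
  obtain ⟨w, hw⟩ := h
  obtain ⟨hmono, hmem, halt⟩ := id hw
  have h01 : f (w 0) * (w 0 - y) * (f (w 1) * (w 1 - y)) < 0 := halt 0
  have hf1 : f (w 1) ≠ 0 := by rintro h; simp [h] at h01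
  have hw1y : w 1 ≠ y := by rintro h; simp [h] at h01
  rcases lt_or_gt_of_ne (show w 0 ≠ y by rintro rfl; simp at h01) with h0 | h0
  · have hw1 : y < w 1 := by
      by_contra! h1
      have h1 := h1.lt_of_ne hw1y
      have := hleft _ ⟨(hmem 0).1, h0⟩ _ ⟨(hmem 1).1, h1⟩
      nlinarith [mul_pos_of_neg_of_neg (sub_neg.2 h0) (sub_neg.2 h1)]
    have htail : SignChangesAt f (Ioo a b) (Fin.tail w) :=
      hw.tail.of_mul_pos fun j => sub_pos.2 (hw1.trans_le (hmono.monotone (Fin.succ_pos j)))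
    obtain ⟨q, hq, hqneg⟩ := exists_mul_neg_of_not_signConstantOn (hright _ hw1) hf1
    have hpos : 0 < f (w 0) * f (w 1) := by
      nlinarith [mul_neg_of_neg_of_pos (sub_neg.2 h0) (sub_pos.2 hw1)]
    have hq0 : w 0 < q := by
      by_contra! hq0
      have := hleft q ⟨hq.1, hq0.trans_lt h0⟩ _ ⟨(hmem 0).1, h0⟩
      nlinarith [mul_self_pos.2 hf1]
    refine ⟨_, ((htail.cons ⟨hq.1, hq.2.trans (hmem 1).2⟩ hq.2 hqneg).cons (hmem 0) hq0 ?_)⟩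
    show f (w 0) * f q < 0
    nlinarith [mul_self_pos.2 hf1]
  · obtain ⟨q, hq, hqneg⟩ := exists_mul_neg_of_not_signConstantOn (hright _ h0)
      (show f (w 0) ≠ 0 by rintro h; simp [h] at h01)
    refine ⟨_, (hw.of_mul_pos fun j => ?_).cons ⟨hq.1, hq.2.trans (hmem 0).2⟩ hq.2 hqneg⟩
    exact sub_pos.2 (h0.trans_le (hmono.monotone (Fin.zero_le j)))

theorem exists_signConstantOn_mul_prod_sub {a b : ℝ} {k : ℕ} :
    ∀ {f : ℝ → ℝ}, ¬ HasSignChanges f (Ioo a b) (k + 1) →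
      ∃ ys : List ℝ, ys.length ≤ k ∧ (∀ y ∈ ys, a ≤ y) ∧
        SignConstantOn (fun t => f t * (ys.map (t - ·)).prod) (Ioo a b) := by
  induction k with
  | zero =>
    intro f h
    exact ⟨[], le_rfl, by simp, by simpa using signConstantOn_of_not_hasSignChanges_one h⟩
  | succ k ih =>
    intro f h
    by_cases hconst : SignConstantOn f (Ioo a b)
    · exact ⟨[], Nat.zero_le _, by simp, by simpa using hconst⟩
    obtain ⟨y, hay, hleft, hright⟩ := exists_signConstantOn_Ioo_maximal hconst
    obtain ⟨ys, hlen, hys, hys_const⟩ := ih fun hg => h (hg.of_mul_sub hleft hright)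
    refine ⟨y :: ys, by simpa using hlen, by simpa using ⟨hay, hys⟩, ?_⟩
    simpa only [List.map_cons, List.prod_cons, mul_assoc] using hys_const

theorem exists_mul_pos_of_mul_neg {a : ℕ → ℝ} {y : ℝ} (hy : 0 ≤ y) {p q : ℕ} (hpq : p ≤ q)
    (h : a p * a q < 0) : ∃ m, p ≤ m ∧ m < q ∧ 0 < (a (m + 1) - y * a m) * a q := by
  by_contra! hle
  have key : ∀ m, p ≤ m → m ≤ q → a m * a q ≤ 0 := by
    intro m hpm
    induction m, hpm using Nat.le_induction with
    | base => exact fun _ => h.le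
    | succ m hpm ih =>
      intro hmq
      nlinarith [hle m hpm hmq, mul_nonpos_of_nonneg_of_nonpos hy (ih (Nat.le_of_succ_le hmq))]
  have hq : a q = 0 := mul_self_eq_zero.1 (le_antisymm (key q hpq le_rfl) (mul_self_nonneg _))
  simp [hq] at h

theorem HasSignChanges.succ_sub_mul {a : ℕ → ℝ} {y : ℝ} (hy : 0 ≤ y) {M : ℕ}
    (h : HasSignChanges a univ (M + 1)) :
    HasSignChanges (fun m => a (m + 1) - y * a m) univ M := by
  obtain ⟨n, hmono, -, halt⟩ := h
  choose m hm using fun j : Fin (M + 1) =>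
    exists_mul_pos_of_mul_neg hy (hmono.monotone j.castSucc_le_succ) (halt j)
  refine ⟨m, Fin.strictMono_iff_lt_succ.2 fun j => ?_, fun _ => trivial, fun j => ?_⟩
  · have h1 := (hm j.castSucc).2.1
    have h2 := (hm j.succ).1
    rw [Fin.succ_castSucc] at h1
    omega
  · have h1 := (hm j.castSucc).2.2
    have h2 := (hm j.succ).2.2
    have h3 := halt j.succ
    rw [Fin.succ_castSucc] at h1
    nlinarith

section Moments

open MeasureTheory

noncomputable def moment (f : ℝ → ℝ) (c : ℝ) (m : ℕ) : ℝ := ∫ t in (0 : ℝ)..c, f t * t ^ m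

variable {f : ℝ → ℝ} {c : ℝ}

theorem moment_mul_sub (hf : ∀ m, IntervalIntegrable (fun t => f t * t ^ m) volume 0 c)
    (y : ℝ) (m : ℕ) :
    moment (fun t => f t * (t - y)) c m = moment f c (m + 1) - y * moment f c m := by
  rw [moment, moment, moment, ← intervalIntegral.integral_const_mul,
    ← intervalIntegral.integral_sub (hf _) ((hf m).const_mul y)]
  congr 1
  ext t
  ring

theorem intervalIntegrable_mul_sub_mul_pow
    (hf : ∀ m, IntervalIntegrable (fun t => f t * t ^ m) volume 0 c) (y : ℝ) (m : ℕ) :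
    IntervalIntegrable (fun t => f t * (t - y) * t ^ m) volume 0 c := by
  have h : (fun t => f t * (t - y) * t ^ m) = fun t => f t * t ^ (m + 1) - y * (f t * t ^ m) := by
    ext t
    ring
  exact h ▸ (hf (m + 1)).sub ((hf m).const_mul y)

theorem HasSignChanges.moment_mul_prod_sub
    (hf : ∀ m, IntervalIntegrable (fun t => f t * t ^ m) volume 0 c) {ys : List ℝ}
    (hys : ∀ y ∈ ys, 0 ≤ y) {M : ℕ} (h : HasSignChanges (moment f c) univ (M + ys.length)) :
    HasSignChanges (moment (fun t => f t * (ys.map (t - ·)).prod) c) univ M := by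
  induction ys generalizing f with
  | nil => simpa using h
  | cons y ys ih =>
    have hy := hys y List.mem_cons_self
    have step := ih (intervalIntegrable_mul_sub_mul_pow hf y)
      (fun z hz => hys z (List.mem_cons_of_mem _ hz))
      (funext (moment_mul_sub hf y) ▸ h.succ_sub_mul hy)
    simpa only [List.map_cons, List.prod_cons, mul_assoc] using step

theorem moment_nonneg (hc : 0 ≤ c) (hf : ∀ t ∈ Ioo 0 c, 0 ≤ f t) (m : ℕ) : 0 ≤ moment f c m := by
  rw [moment, intervalIntegral.integral_of_le hc, integral_Ioc_eq_integral_Ioo]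
  exact setIntegral_nonneg measurableSet_Ioo fun t ht => mul_nonneg (hf t ht) (pow_nonneg ht.1.le m)

theorem signConstantOn_moment (hc : 0 ≤ c) (hf : SignConstantOn f (Ioo 0 c)) :
    SignConstantOn (moment f c) univ := by
  intro m _ n _
  rcases hf.nonneg_or_nonpos with hpos | hneg
  · exact mul_nonneg (moment_nonneg hc hpos m) (moment_nonneg hc hpos n)
  · have hneg' : ∀ m, 0 ≤ -moment f c m := fun m => by
      simpa only [moment, neg_mul, intervalIntegral.integral_neg] using
        moment_nonneg hc (fun t ht => neg_nonneg.2 (hneg t ht)) m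
    simpa only [neg_mul_neg] using mul_nonneg (hneg' m) (hneg' n)

end Moments

theorem stmt12 (c : ℝ) (hc : 0 < c) (f : ℝ → ℝ)
    (hf : ContinuousOn f (Set.Icc 0 c)) (N : ℕ)
    (moments : ∃ n : Fin (N + 1) → ℕ, StrictMono n ∧
      ∀ j : Fin N, (∫ t in (0 : ℝ)..c, f t * t ^ (n j.castSucc)) *
        (∫ t in (0 : ℝ)..c, f t * t ^ (n j.succ)) < 0) :
    ∃ x : Fin (N + 1) → ℝ, StrictMono x ∧ (∀ j, x j ∈ Set.Ioo 0 c) ∧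
      ∀ j : Fin N, f (x j.castSucc) * f (x j.succ) < 0 := by
  obtain _ | k := N
  · exact ⟨_, signChangesAt_const (show c / 2 ∈ Ioo 0 c from ⟨by positivity, by linarith⟩)⟩
  obtain ⟨n, hmono, halt⟩ := moments
  have hmoments : HasSignChanges (moment f c) univ (k + 1) := ⟨n, hmono, fun _ => trivial, halt⟩
  have hint : ∀ m, IntervalIntegrable (fun t => f t * t ^ m) MeasureTheory.volume 0 c :=
    fun m => (hf.mul (continuous_pow m).continuousOn).intervalIntegrable_of_Icc hc.le
  by_contra hfew
  obtain ⟨ys, hlen, hys, hconst⟩ := exists_signConstantOn_mul_prod_sub hfew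
  obtain ⟨M, rfl⟩ : ∃ M, k = M + ys.length := ⟨k - ys.length, by omega⟩
  rw [add_right_comm] at hmoments
  exact (hmoments.moment_mul_prod_sub hint hys).not_signConstantOn
    (signConstantOn_moment hc.le hconst)
end

section
/- Let f : [0, ∞) → ℝ be continuous with ∫_0^∞ |f(t)| t^n dt < ∞ for all n ≥ 0. If the moments μ_n = ∫_0^∞ f(t) t^{2n} dt satisfy (-1)^n μ_n > 0 for all n ≥ 0 (i.e., alternate in sign), then f has infinitely many zeroes in (0, ∞). -/
/-!
If `f` had only finitely many zeroes in `(0, ∞)`, it would have a constant sign, say positive,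
on some `(a, ∞)`. Splitting `∫₀^∞ f t tⁿ dt` at `a`, the part over `(0, a]` is `O(aⁿ)` while the
part over `(a, ∞)` is at least `(a + 1)ⁿ ∫_{a+1}^∞ f`, so the moments are eventually positive
(or, for negative `f`, eventually negative). This contradicts the alternation of signs.
-/

open Real MeasureTheory Set Filter Topology

lemma IsPreconnected.forall_pos_or_forall_neg {X : Type*} [TopologicalSpace X] {s : Set X}
    {f : X → ℝ} (hs : IsPreconnected s) (hf : ContinuousOn f s) (hne : ∀ x ∈ s, f x ≠ 0) :
    (∀ x ∈ s, 0 < f x) ∨ ∀ x ∈ s, f x < 0 := by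
  by_contra! h
  obtain ⟨⟨x, hx, hfx⟩, y, hy, hfy⟩ := h
  obtain ⟨z, hz, hfz⟩ := hs.intermediate_value hx hy hf ⟨hfx, hfy⟩
  exact hne z hz hfz

lemma exists_forall_Ioi_pos_or_neg_of_finite_zeros {f : ℝ → ℝ} (hf : Continuous f)
    (hfin : {t : ℝ | 0 < t ∧ f t = 0}.Finite) :
    ∃ a, 0 ≤ a ∧ ((∀ t ∈ Ioi a, 0 < f t) ∨ ∀ t ∈ Ioi a, f t < 0) := by
  obtain ⟨b, hb⟩ := hfin.bddAbove
  refine ⟨max b 0, le_max_right b 0,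
    isPreconnected_Ioi.forall_pos_or_forall_neg hf.continuousOn fun t ht hft => ?_⟩
  have hbt : max b 0 < t := ht
  have htb : t ≤ b := hb ⟨(le_max_right b 0).trans_lt hbt, hft⟩
  linarith [le_max_left b 0]

section Moments

variable {f : ℝ → ℝ} {a : ℝ}

lemma abs_setIntegral_Ioc_mul_pow_le (hf : IntegrableOn f (Ioc 0 a)) (n : ℕ) :
    |∫ t in Ioc 0 a, f t * t ^ n| ≤ a ^ n * ∫ t in Ioc 0 a, |f t| := by
  rw [← Real.norm_eq_abs, ← integral_const_mul (a ^ n)]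
  refine norm_integral_le_of_norm_le (hf.abs.const_mul (a ^ n)) ?_
  filter_upwards [ae_restrict_mem measurableSet_Ioc] with t ht
  rw [norm_mul, norm_pow, Real.norm_eq_abs, Real.norm_of_nonneg ht.1.le, mul_comm]
  exact mul_le_mul_of_nonneg_right (pow_le_pow_left₀ ht.1.le ht.2 n) (abs_nonneg _)

lemma pow_mul_setIntegral_Ioi_le_setIntegral_Ioi_mul_pow {b : ℝ} (ha : 0 ≤ a) (hab : a ≤ b)
    (hpos : ∀ t ∈ Ioi a, 0 < f t) (hfb : IntegrableOn f (Ioi b)) {n : ℕ}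
    (hfn : IntegrableOn (fun t => f t * t ^ n) (Ioi a)) :
    b ^ n * ∫ t in Ioi b, f t ≤ ∫ t in Ioi a, f t * t ^ n := by
  have hnonneg : ∀ t ∈ Ioi a, 0 ≤ f t * t ^ n := fun t ht =>
    mul_nonneg (hpos t ht).le (pow_nonneg (ha.trans (le_of_lt ht)) n)
  rw [← integral_const_mul]
  calc ∫ t in Ioi b, b ^ n * f t
      ≤ ∫ t in Ioi b, f t * t ^ n := by
        refine setIntegral_mono_on (hfb.const_mul _) (hfn.mono_set (Ioi_subset_Ioi hab))
          measurableSet_Ioi fun t ht => ?_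
        rw [mul_comm]
        exact mul_le_mul_of_nonneg_left (pow_le_pow_left₀ (ha.trans hab) (le_of_lt ht) n)
          (hpos t (hab.trans_lt ht)).le
    _ ≤ ∫ t in Ioi a, f t * t ^ n :=
        setIntegral_mono_set hfn
          ((ae_restrict_iff' measurableSet_Ioi).2 (Eventually.of_forall hnonneg))
          (Ioi_subset_Ioi hab).eventuallyLE

lemma setIntegral_Ioi_pos_of_forall_pos (hpos : ∀ t ∈ Ioi a, 0 < f t)
    (hf : IntegrableOn f (Ioi a)) : 0 < ∫ t in Ioi a, f t := by
  rw [setIntegral_pos_iff_support_of_nonneg_ae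
    ((ae_restrict_iff' measurableSet_Ioi).2 (Eventually.of_forall fun t ht => (hpos t ht).le)) hf,
    inter_eq_right.2 (show Ioi a ⊆ Function.support f from fun t ht => (hpos t ht).ne'),
    Real.volume_Ioi]
  exact ENNReal.zero_lt_top

theorem eventually_pos_setIntegral_Ioi_mul_pow (ha : 0 ≤ a) (hpos : ∀ t ∈ Ioi a, 0 < f t)
    (hint : ∀ n : ℕ, IntegrableOn (fun t => f t * t ^ n) (Ioi 0)) :
    ∀ᶠ n in atTop, 0 < ∫ t in Ioi 0, f t * t ^ n := by
  have hf : IntegrableOn f (Ioi 0) := by simpa using hint 0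
  set C := ∫ t in Ioc 0 a, |f t|
  set c := ∫ t in Ioi (a + 1), f t
  have hc : 0 < c := setIntegral_Ioi_pos_of_forall_pos
    (fun t ht => hpos t (lt_trans (lt_add_one a) ht)) (hf.mono_set (Ioi_subset_Ioi (by linarith)))
  have hratio : Tendsto (fun n : ℕ => (a / (a + 1)) ^ n * C) atTop (𝓝 0) := by
    simpa using (tendsto_pow_atTop_nhds_zero_of_lt_one (by positivity)
      ((div_lt_one (by linarith)).2 (lt_add_one a))).mul_const C
  filter_upwards [hratio.eventually (gt_mem_nhds hc)] with n hn
  have hdom : a ^ n * C < (a + 1) ^ n * c := by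
    rwa [div_pow, div_mul_eq_mul_div, div_lt_iff₀ (by positivity), mul_comm c] at hn
  have hsplit : ∫ t in Ioi 0, f t * t ^ n
      = (∫ t in Ioc 0 a, f t * t ^ n) + ∫ t in Ioi a, f t * t ^ n := by
    rw [← setIntegral_union (Ioc_disjoint_Ioi le_rfl) measurableSet_Ioi
      ((hint n).mono_set Ioc_subset_Ioi_self) ((hint n).mono_set (Ioi_subset_Ioi ha)),
      Ioc_union_Ioi_eq_Ioi ha]
  have hhead := abs_setIntegral_Ioc_mul_pow_le (a := a) (hf.mono_set Ioc_subset_Ioi_self) n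
  have htail := pow_mul_setIntegral_Ioi_le_setIntegral_Ioi_mul_pow ha (le_of_lt (lt_add_one a))
    hpos (hf.mono_set (Ioi_subset_Ioi (by linarith))) ((hint n).mono_set (Ioi_subset_Ioi ha))
  rw [hsplit]
  linarith [neg_abs_le (∫ t in Ioc 0 a, f t * t ^ n)]

theorem eventually_setIntegral_Ioi_mul_pow_neg (ha : 0 ≤ a) (hneg : ∀ t ∈ Ioi a, f t < 0)
    (hint : ∀ n : ℕ, IntegrableOn (fun t => f t * t ^ n) (Ioi 0)) :
    ∀ᶠ n in atTop, ∫ t in Ioi 0, f t * t ^ n < 0 := by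
  simpa [neg_mul, integral_neg] using eventually_pos_setIntegral_Ioi_mul_pow (f := -f) ha
    (fun t ht => neg_pos.2 (hneg t ht)) fun n => by simpa [neg_mul] using (hint n).neg

end Moments

theorem stmt13 (f : ℝ → ℝ) (hf : Continuous f)
    (hint : ∀ n : ℕ, IntegrableOn (fun t => |f t| * t ^ n) (Set.Ici 0))
    (halt : ∀ n : ℕ, 0 < (-1 : ℝ) ^ n * ∫ t in Set.Ioi (0 : ℝ), f t * t ^ (2 * n)) :
    {t : ℝ | 0 < t ∧ f t = 0}.Infinite := by
  have hmom : ∀ n : ℕ, IntegrableOn (fun t => f t * t ^ n) (Ioi 0) := fun n =>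
    ((hint n).mono_set Ioi_subset_Ici_self).mono'
      (hf.mul (continuous_pow n)).aestronglyMeasurable.restrict <| by
        filter_upwards [ae_restrict_mem measurableSet_Ioi] with t ht
        rw [norm_mul, norm_pow, Real.norm_eq_abs, Real.norm_of_nonneg (le_of_lt ht)]
  have hdouble : Tendsto (fun n : ℕ => 2 * n) atTop atTop :=
    tendsto_id.const_mul_atTop' two_pos
  by_contra hfin
  obtain ⟨a, ha, hpos | hneg⟩ :=
    exists_forall_Ioi_pos_or_neg_of_finite_zeros hf (Set.not_infinite.1 hfin)
  · obtain ⟨N, hN⟩ := eventually_atTop.1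
      (hdouble.eventually (eventually_pos_setIntegral_Ioi_mul_pow ha hpos hmom))
    have hodd := halt (2 * N + 1)
    rw [Odd.neg_one_pow ⟨N, rfl⟩] at hodd
    linarith [hN (2 * N + 1) (by omega)]
  · obtain ⟨N, hN⟩ := eventually_atTop.1
      (hdouble.eventually (eventually_setIntegral_Ioi_mul_pow_neg ha hneg hmom))
    have heven := halt (2 * N)
    rw [(even_two_mul N).neg_one_pow, one_mul] at heven
    linarith [hN (2 * N) (by omega)]
end
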